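/- For fixed λ_2, ..., λ_K > 0, the function λ_1 ↦ Σ_{S ∋ 1} (-1)^{|S|-1}/(Σ_{i∈S} λ_i) + Σ_{S ⊆ {2,...,K}, S ≠ ∅} (-1)^{|S|-1}/(Σ_{i∈S} λ_i), equal to E[max_i T_i] where T_i ~ Exp(λ_i) are independent, is strictly decreasing in λ_1 on (0, ∞). -/

import Mathlib

/-!
Write `R` for the indices other than `1` and `λ_T = ∑_{i ∈ T} λ_i`. Up to a constant, the function is
`H_0(x)`, where `H_m(x) = ∑_{T ⊆ R} (-1)^|T| (x + λ_T)^{-(m+1)}` is the iterated forward difference of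
`x ↦ x^{-(m+1)}` with steps `λ_i`, `i ∈ R`. Adding an index `j` to `R` replaces `H_m(x)` by
`H_m(x) - H_m(x + λ_j)`, and `H_m' = -(m+1) H_{m+1}`. Induction on `R`, for all `m` at once, shows that
every `H_m` is positive on `(0, ∞)`, hence every `H_m` is strictly decreasing there.
-/

open Finset

section InvPowDiff

variable {ι : Type*} (w : ι → ℝ)

noncomputable def invPowDiff (R : Finset ι) (m : ℕ) (x : ℝ) : ℝ :=
  ∑ T ∈ R.powerset, (-1 : ℝ) ^ T.card * (x + ∑ i ∈ T, w i) ^ (-(m + 1 : ℤ))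

theorem invPowDiff_insert [DecidableEq ι] {R : Finset ι} {j : ι} (hj : j ∉ R) (m : ℕ) (x : ℝ) :
    invPowDiff w (insert j R) m x = invPowDiff w R m x - invPowDiff w R m (x + w j) := by
  have hinsert : ∀ T ∈ R.powerset,
      (-1 : ℝ) ^ (insert j T).card * (x + ∑ i ∈ insert j T, w i) ^ (-(m + 1 : ℤ))
        = -((-1 : ℝ) ^ T.card * (x + w j + ∑ i ∈ T, w i) ^ (-(m + 1 : ℤ))) := by
    intro T hT
    have hjT : j ∉ T := fun h => hj (mem_powerset.1 hT h)
    rw [card_insert_of_notMem hjT, sum_insert hjT, pow_succ, add_assoc]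
    ring
  rw [invPowDiff, sum_powerset_insert hj, sum_congr rfl hinsert, sum_neg_distrib]
  rfl

theorem hasDerivAt_invPowDiff {R : Finset ι} (hw : ∀ i ∈ R, 0 < w i) (m : ℕ) {x : ℝ}
    (hx : 0 < x) : HasDerivAt (invPowDiff w R m) (-(m + 1) * invPowDiff w R (m + 1) x) x := by
  rw [invPowDiff, mul_sum]
  refine HasDerivAt.fun_sum fun T hT => ?_
  have hpos : 0 < x + ∑ i ∈ T, w i :=
    add_pos_of_pos_of_nonneg hx (sum_nonneg fun i hi => (hw i (mem_powerset.1 hT hi)).le)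
  refine (((hasDerivAt_zpow (-(m + 1 : ℤ)) _ (Or.inl hpos.ne')).comp_add_const x
    (∑ i ∈ T, w i)).const_mul ((-1 : ℝ) ^ T.card)).congr_deriv ?_
  rw [show -(((m + 1 : ℕ) : ℤ) + 1) = -(m + 1 : ℤ) - 1 by push_cast; ring]
  push_cast
  ring

theorem invPowDiff_strictAntiOn_of_pos {R : Finset ι} (hw : ∀ i ∈ R, 0 < w i) {m : ℕ}
    (hpos : ∀ x, 0 < x → 0 < invPowDiff w R (m + 1) x) :
    StrictAntiOn (invPowDiff w R m) (Set.Ioi 0) := by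
  refine strictAntiOn_of_hasDerivWithinAt_neg (f' := fun x => -(m + 1) * invPowDiff w R (m + 1) x)
    (convex_Ioi 0)
    (fun x hx => (hasDerivAt_invPowDiff w hw m hx).continuousAt.continuousWithinAt)
    (fun x hx => ?_) (fun x hx => ?_)
  · rw [interior_Ioi] at hx
    exact (hasDerivAt_invPowDiff w hw m hx).hasDerivWithinAt
  · rw [interior_Ioi] at hx
    have := hpos x hx
    nlinarith

theorem invPowDiff_pos (R : Finset ι) (hw : ∀ i ∈ R, 0 < w i) (m : ℕ) {x : ℝ} (hx : 0 < x) :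
    0 < invPowDiff w R m x := by
  classical
  induction R using Finset.induction_on generalizing m x with
  | empty => simpa [invPowDiff] using zpow_pos hx _
  | @insert j R hj ih =>
    have hwR : ∀ i ∈ R, 0 < w i := fun i hi => hw i (mem_insert_of_mem hi)
    have hwj : 0 < w j := hw j (mem_insert_self j R)
    have hanti := invPowDiff_strictAntiOn_of_pos w hwR fun y hy => ih hwR (m + 1) hy
    rw [invPowDiff_insert w hj, sub_pos]
    exact hanti hx (show 0 < x + w j by positivity) (lt_add_of_pos_right x hwj)

theorem invPowDiff_strictAntiOn (R : Finset ι) (hw : ∀ i ∈ R, 0 < w i) (m : ℕ) :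
    StrictAntiOn (invPowDiff w R m) (Set.Ioi 0) :=
  invPowDiff_strictAntiOn_of_pos w hw fun _ hx => invPowDiff_pos w R hw (m + 1) hx

end InvPowDiff

/-- The empty set contributes `(-1) ^ (0 - 1) / 0 = 0` to the right-hand side. -/
theorem sum_nonempty_subsets_update_eq {ι : Type*} [Fintype ι] [DecidableEq ι] (w : ι → ℝ)
    (z : ι) (x : ℝ) :
    ∑ S ∈ univ.powerset.filter (· ≠ (∅ : Finset ι)),
        (-1 : ℝ) ^ (S.card - 1) / (∑ i ∈ S, (if i = z then x else w i))
      = invPowDiff w (univ.erase z) 0 x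
        + ∑ T ∈ (univ.erase z).powerset, (-1 : ℝ) ^ (T.card - 1) / (∑ i ∈ T, w i) := by
  set R := univ.erase z
  have hzR : z ∉ R := notMem_erase z _
  have hsum_update : ∀ T ∈ R.powerset,
      ∑ i ∈ T, (if i = z then x else w i) = ∑ i ∈ T, w i := fun T hT =>
    sum_congr rfl fun i hi => if_neg fun h : i = z => hzR (h ▸ mem_powerset.1 hT hi)
  rw [sum_filter_of_ne fun S _ hS => by rintro rfl; simp at hS,
    ← insert_erase (mem_univ z), sum_powerset_insert hzR, add_comm]
  congr 1
  · refine sum_congr rfl fun T hT => ?_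
    have hzT : z ∉ T := fun h => hzR (mem_powerset.1 hT h)
    rw [card_insert_of_notMem hzT, sum_insert hzT, if_pos rfl, hsum_update T hT]
    simp [div_eq_mul_inv]
  · exact sum_congr rfl fun T hT => by rw [hsum_update T hT]

theorem expected_max_strictly_decreasing_in_rate
    (K : ℕ) (hK : 0 < K) (lam : Fin K → ℝ) (hlam : ∀ i, 0 < lam i) :
    StrictAntiOn
      (fun x : ℝ =>
        ∑ S ∈ Finset.univ.powerset.filter (· ≠ (∅ : Finset (Fin K))),
          (-1 : ℝ) ^ (S.card - 1) /
            (∑ i ∈ S, (if i = ⟨0, hK⟩ then x else lam i)))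
      (Set.Ioi 0) := by
  intro x hx y hy hxy
  simp only [sum_nonempty_subsets_update_eq]
  gcongr ?_ + _
  exact invPowDiff_strictAntiOn lam _ (fun i _ => hlam i) 0 hx hy hxy
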